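/- Let (G,τ) be a metrizable precompact Hausdorff abelian group and let u = (u_n) be a TB-sequence in G with τ = τ_u. Then the subgroup ⟨u⟩ of G generated by the terms of u has finite index in G. -/

import Mathlib

open Filter Topology

noncomputable section

namespace SSChar

/-- The circle group `𝕋 = ℝ/ℤ`. -/
abbrev Torus : Type := AddCircle (1 : ℝ)

variable {G : Type*}

/-- The covering condition defining precompactness (total boundedness) of a group
topology: every neighborhood `U` of `0` admits a finite set `F` with `G = F + U`. -/
def PrecompactCover [AddCommGroup G] (t : TopologicalSpace G) : Prop :=
  ∀ U ∈ @nhds G t 0, ∃ F : Set G, F.Finite ∧ ∀ x : G, ∃ f ∈ F, x - f ∈ U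

/-- `t` is a Hausdorff group topology on `G`. -/
def IsHausdorffGroupTopology [AddCommGroup G] (t : TopologicalSpace G) : Prop :=
  @IsTopologicalAddGroup G t _ ∧ @T2Space G t

/-- `t` is a precompact Hausdorff group topology on `G`. -/
def IsPrecompactGroupTopology [AddCommGroup G] (t : TopologicalSpace G) : Prop :=
  IsHausdorffGroupTopology t ∧ PrecompactCover t

/-- The sequence `u` converges to `0` in the topology `t`. -/
def ConvergesToZero [AddCommGroup G] (t : TopologicalSpace G) (u : ℕ → G) : Prop :=
  Filter.Tendsto u Filter.atTop (@nhds G t 0)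

/-- `u` is a TB-sequence: some precompact Hausdorff group topology makes `u → 0`. -/
def IsTBSequence [AddCommGroup G] (u : ℕ → G) : Prop :=
  ∃ t : TopologicalSpace G, IsPrecompactGroupTopology t ∧ ConvergesToZero t u

/-- `t` is the finest precompact Hausdorff group topology in which `u → 0`,
i.e. `t = τ_u`.  (Recall that in Mathlib's order on topologies, finer means `≤`.) -/
def IsTauU [AddCommGroup G] (u : ℕ → G) (t : TopologicalSpace G) : Prop :=
  IsPrecompactGroupTopology t ∧ ConvergesToZero t u ∧
    ∀ t' : TopologicalSpace G, IsPrecompactGroupTopology t' → ConvergesToZero t' u → t ≤ t'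

/-- `t` is the finest Hausdorff group topology in which `u → 0`, i.e. `t = 𝒯_u`. -/
def IsTTu [AddCommGroup G] (u : ℕ → G) (t : TopologicalSpace G) : Prop :=
  IsHausdorffGroupTopology t ∧ ConvergesToZero t u ∧
    ∀ t' : TopologicalSpace G, IsHausdorffGroupTopology t' → ConvergesToZero t' u → t ≤ t'

/-- `(G, t)` is single-sequence characterized: `t = τ_u` for some (TB-)sequence `u`. -/
def SSCharacterized [AddCommGroup G] (t : TopologicalSpace G) : Prop :=
  ∃ u : ℕ → G, IsTauU u t

/-- `χ` is a `t`-continuous character of `G`. -/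
def IsContChar [AddCommGroup G] (t : TopologicalSpace G) (χ : G →+ Torus) : Prop :=
  @Continuous G Torus t _ χ

/-- The group of `t`-continuous characters of `G`. -/
def charGroup (G : Type*) [AddCommGroup G] (t : TopologicalSpace G) : Type _ :=
  {χ : G →+ Torus // IsContChar t χ}

/-- The compact-open topology on the character group: this makes it the
Pontryagin dual `(G,t)^∧`. -/
def charTopology (G : Type*) [AddCommGroup G] (t : TopologicalSpace G) :
    TopologicalSpace (charGroup G t) :=
  TopologicalSpace.generateFrom
    { S | ∃ (K : Set G) (U : Set Torus), @IsCompact G t K ∧ IsOpen U ∧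
        S = { χ : charGroup G t | ∀ x ∈ K, χ.1 x ∈ U } }

/-- The Bohr modification `t⁺` of `t`: the initial topology induced by all
`t`-continuous characters. -/
def bohrModification [AddCommGroup G] (t : TopologicalSpace G) : TopologicalSpace G :=
  ⨅ χ : charGroup G t, TopologicalSpace.induced (χ.1 : G → Torus) inferInstance

/-- The Bohr topology of the (discrete) abelian group `X`: the initial topology
induced by all homomorphisms `X → 𝕋`. -/
def bohrDiscrete (X : Type*) [AddCommGroup X] : TopologicalSpace X :=
  ⨅ χ : X →+ Torus, TopologicalSpace.induced (χ : X → Torus) inferInstance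

/-- The extension topology `ζ̄` on `G` of a group topology `ζ` on the subgroup `H`:
its neighborhood filter at `x` is generated by the sets `x + V`, `V` a
`ζ`-neighborhood of `0` in `H`. -/
def extTopology [AddCommGroup G] (H : AddSubgroup G) (ζ : TopologicalSpace H) :
    TopologicalSpace G :=
  TopologicalSpace.mkOfNhds fun x => Filter.map (fun h : H => x + (h : G)) (@nhds H ζ 0)

/-- The subspace topology induced on a subgroup `H` by a topology `t` on `G`. -/
def restrictTopology [AddCommGroup G] (H : AddSubgroup G) (t : TopologicalSpace G) :
    TopologicalSpace H :=
  t.induced (Subtype.val : H → G)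

/-- The quotient topology on `G ⧸ H` induced by a topology `t` on `G`. -/
def quotientTopology [AddCommGroup G] (H : AddSubgroup G) (t : TopologicalSpace G) :
    TopologicalSpace (G ⧸ H) :=
  t.coinduced (QuotientAddGroup.mk : G → G ⧸ H)

/-- `H` is B-embedded in `(G, t)`: every (algebraic) character of `G ⧸ H` is
continuous in the quotient topology. -/
def IsBEmbedded [AddCommGroup G] (t : TopologicalSpace G) (H : AddSubgroup G) : Prop :=
  ∀ χ : G ⧸ H →+ Torus, @Continuous (G ⧸ H) Torus (quotientTopology H t) _ χ

/-- `t` is the finest precompact extension to `G` of the topology `ζ` on the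
subgroup `H`: `t` is a precompact Hausdorff group topology restricting to `ζ` on `H`,
and every precompact Hausdorff group topology on `G` restricting to `ζ` on `H`
is coarser than `t`. -/
def IsFinestPrecompactExtension [AddCommGroup G] (H : AddSubgroup G)
    (ζ : TopologicalSpace H) (t : TopologicalSpace G) : Prop :=
  IsPrecompactGroupTopology t ∧ restrictTopology H t = ζ ∧
    ∀ t' : TopologicalSpace G, IsPrecompactGroupTopology t' → restrictTopology H t' = ζ →
      t ≤ t'

/-- `𝕋₊`: the image of `[-1/4, 1/4]` under the quotient map `ℝ → 𝕋`. -/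
def Tplus : Set Torus := (fun x : ℝ => (x : Torus)) '' Set.Icc (-(1/4) : ℝ) (1/4)

/-- `A` is quasi-convex in `(G, t)`. -/
def IsQuasiConvex [AddCommGroup G] (t : TopologicalSpace G) (A : Set G) : Prop :=
  ∀ g ∉ A, ∃ χ : G →+ Torus, IsContChar t χ ∧ (∀ a ∈ A, χ a ∈ Tplus) ∧ χ g ∉ Tplus

/-- `(G, t)` is locally quasi-convex: `0` has a neighborhood base of
quasi-convex sets. -/
def IsLocallyQuasiConvex [AddCommGroup G] (t : TopologicalSpace G) : Prop :=
  ∀ U ∈ @nhds G t 0, ∃ V ∈ @nhds G t 0, V ⊆ U ∧ IsQuasiConvex t V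

/-- The weight of a topology: the minimal cardinality of a base. -/
def tweight {X : Type*} (t : TopologicalSpace X) : Cardinal :=
  sInf { c : Cardinal |
    ∃ B : Set (Set X), @TopologicalSpace.IsTopologicalBasis X t B ∧ c = Cardinal.mk B }

/-- `(G, t)` is maximally almost periodic: the `t`-continuous characters
separate the points of `G`. -/
def IsMAP [AddCommGroup G] (t : TopologicalSpace G) : Prop :=
  ∀ x : G, x ≠ 0 → ∃ χ : G →+ Torus, IsContChar t χ ∧ χ x ≠ 0

/-- Two topologies on `G` are compatible: they have the same continuous characters. -/
def Compatible [AddCommGroup G] (t t' : TopologicalSpace G) : Prop :=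
  ∀ χ : G →+ Torus, IsContChar t χ ↔ IsContChar t' χ

/-- `(G, t)` is a MAP-Mackey group: it is a MAP Hausdorff group topology and every
compatible MAP group topology on `G` is coarser. -/
def IsMAPMackey [AddCommGroup G] (t : TopologicalSpace G) : Prop :=
  IsHausdorffGroupTopology t ∧ IsMAP t ∧
    ∀ t' : TopologicalSpace G, @IsTopologicalAddGroup G t' _ → IsMAP t' → Compatible t t' →
      t ≤ t'

/-- `(X, t)` is a k-space: a subset is closed as soon as its intersection with every
compact subset `K` is closed in `K`. -/
def IsKSpace {X : Type*} (t : TopologicalSpace X) : Prop :=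
  ∀ A : Set X,
    (∀ K : Set X, @IsCompact X t K →
      @IsClosed K (t.induced (Subtype.val : K → X)) {x : K | (x : X) ∈ A}) →
    @IsClosed X t A

/-- `(X, t)` is pseudocompact: every continuous real-valued function is bounded. -/
def IsPseudocompact {X : Type*} (t : TopologicalSpace X) : Prop :=
  ∀ f : X → ℝ, @Continuous X ℝ t _ f → ∃ C : ℝ, ∀ x : X, |f x| ≤ C

/-- `(X, t)` is sequentially complete: every Cauchy sequence (w.r.t. the group
uniformity) converges. -/
def SeqComplete {X : Type*} [AddCommGroup X] (t : TopologicalSpace X) : Prop :=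
  ∀ x : ℕ → X, (∀ U ∈ @nhds X t 0, ∃ N : ℕ, ∀ m ≥ N, ∀ n ≥ N, x m - x n ∈ U) →
    ∃ a : X, Filter.Tendsto x Filter.atTop (@nhds X t a)

/-! The subgroup `H = ⟨u⟩` has finite index because `G ⧸ H` has only countably many
characters.

Every character `ψ` of `G ⧸ H` is `τ`-continuous: the topology `τ ⊓ (ψ ∘ π)⁻¹(𝕋)` is again a
precompact Hausdorff group topology in which `u → 0` (precompactness is total boundedness of the
group uniformity, which survives infima and pull-backs along homomorphisms), so by maximality
of `τ = τ_u` it equals `τ`.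

The dual of a metrizable precompact group is countable. Since a character with all values in
`[-1/4, 1/4]` vanishes (doubling), two characters mapping a neighbourhood `U` of `0` into
`[-1/12, 1/12]` and differing by less than `1/12` on a finite `F` with `G = F + U` coincide;
compactness of `𝕋^F` leaves only finitely many such characters for each `U`, and `0` has a
countable neighbourhood basis.

Finally `Hom(Q, 𝕋)` is a compact subgroup of `𝕋^Q`; if it is countable, the Baire category
theorem makes it discrete, hence finite of some order `n`. All characters then take values in
the finite `n`-torsion of `𝕋`, and since they separate the points of `Q`, `Q` is finite. -/

open Set

section

variable {H : Type*} [AddCommGroup G] [AddCommGroup H]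

/-- Total boundedness at the scale `U` of the group uniformity. -/
def IsCoveredBySmallSets (U : Set G) : Prop :=
  ∃ 𝒮 : Set (Set G), 𝒮.Finite ∧ (∀ x, ∃ S ∈ 𝒮, x ∈ S) ∧ ∀ S ∈ 𝒮, ∀ x ∈ S, ∀ y ∈ S, x - y ∈ U

lemma IsCoveredBySmallSets.mono {U V : Set G} (h : IsCoveredBySmallSets U) (hUV : U ⊆ V) :
    IsCoveredBySmallSets V :=
  let ⟨𝒮, hfin, hcov, hsmall⟩ := h
  ⟨𝒮, hfin, hcov, fun S hS x hx y hy => hUV (hsmall S hS x hx y hy)⟩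

lemma IsCoveredBySmallSets.inter {U V : Set G} (hU : IsCoveredBySmallSets U)
    (hV : IsCoveredBySmallSets V) : IsCoveredBySmallSets (U ∩ V) := by
  obtain ⟨𝒮, h𝒮, hcov𝒮, hsmall𝒮⟩ := hU
  obtain ⟨𝒯, h𝒯, hcov𝒯, hsmall𝒯⟩ := hV
  refine ⟨image2 (· ∩ ·) 𝒮 𝒯, h𝒮.image2 _ h𝒯, fun x => ?_, ?_⟩
  · obtain ⟨S, hS, hxS⟩ := hcov𝒮 x
    obtain ⟨T, hT, hxT⟩ := hcov𝒯 x
    exact ⟨S ∩ T, mem_image2_of_mem hS hT, hxS, hxT⟩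
  · rintro _ ⟨S, hS, T, hT, rfl⟩ x hx y hy
    exact ⟨hsmall𝒮 S hS x hx.1 y hy.1, hsmall𝒯 T hT x hx.2 y hy.2⟩

lemma IsCoveredBySmallSets.preimage {V : Set H} (hV : IsCoveredBySmallSets V) (φ : G →+ H) :
    IsCoveredBySmallSets (φ ⁻¹' V) := by
  obtain ⟨𝒮, h𝒮, hcov, hsmall⟩ := hV
  refine ⟨Set.preimage φ '' 𝒮, h𝒮.image _, fun x => ?_, ?_⟩
  · obtain ⟨S, hS, hxS⟩ := hcov (φ x)
    exact ⟨φ ⁻¹' S, mem_image_of_mem _ hS, hxS⟩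
  · rintro _ ⟨S, hS, rfl⟩ x hx y hy
    simpa using hsmall S hS _ hx _ hy

lemma precompactCover_iff_forall_isCoveredBySmallSets (t : TopologicalSpace G)
    (ht : @IsTopologicalAddGroup G t _) :
    PrecompactCover t ↔ ∀ U ∈ @nhds G t 0, IsCoveredBySmallSets U := by
  let := t
  constructor
  · intro h U hU
    obtain ⟨V, hV, hVU⟩ := exists_nhds_half_neg hU
    obtain ⟨F, hF, hcov⟩ := h V hV
    refine ⟨(fun f => (· - f) ⁻¹' V) '' F, hF.image _, fun x => ?_, ?_⟩
    · obtain ⟨f, hf, hxf⟩ := hcov x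
      exact ⟨_, mem_image_of_mem _ hf, hxf⟩
    · rintro _ ⟨f, -, rfl⟩ x hx y hy
      simpa using hVU _ hx _ hy
  · intro h U hU
    classical
    obtain ⟨𝒮, h𝒮, hcov, hsmall⟩ := h U hU
    let pick : Set G → G := fun S => if hS : S.Nonempty then hS.some else 0
    refine ⟨pick '' 𝒮, h𝒮.image pick, fun x => ?_⟩
    obtain ⟨S, hS, hxS⟩ := hcov x
    have hpick : pick S ∈ S := by
      simp only [pick, dif_pos (show S.Nonempty from ⟨x, hxS⟩)]
      exact Nonempty.some_mem _
    exact ⟨pick S, mem_image_of_mem _ hS, hsmall S hS x hxS _ hpick⟩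

lemma precompactCover_of_compactSpace [TopologicalSpace H] [IsTopologicalAddGroup H]
    [CompactSpace H] : PrecompactCover (‹_› : TopologicalSpace H) := by
  intro U hU
  obtain ⟨F, -, hF⟩ := isCompact_univ.elim_nhds_subcover (fun f => (· - f) ⁻¹' U)
    fun f _ => (continuous_id.sub continuous_const).tendsto' f 0 (sub_self f) hU
  exact ⟨F, F.finite_toSet, fun x => by simpa using hF (mem_univ x)⟩

lemma PrecompactCover.inf {t₁ t₂ : TopologicalSpace G} (h₁ : PrecompactCover t₁)
    (h₂ : PrecompactCover t₂) (ht₁ : @IsTopologicalAddGroup G t₁ _)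
    (ht₂ : @IsTopologicalAddGroup G t₂ _) : PrecompactCover (t₁ ⊓ t₂) := by
  rw [precompactCover_iff_forall_isCoveredBySmallSets _ (topologicalAddGroup_inf ht₁ ht₂)]
  rw [precompactCover_iff_forall_isCoveredBySmallSets _ ‹_›] at h₁ h₂
  intro W hW
  rw [_root_.nhds_inf (t₁ := t₁) (t₂ := t₂)] at hW
  obtain ⟨A, hA, B, hB, hABW⟩ := mem_inf_iff_superset.mp hW
  exact ((h₁ A hA).inter (h₂ B hB)).mono hABW

lemma PrecompactCover.induced [TopologicalSpace H] [IsTopologicalAddGroup H]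
    (h : PrecompactCover (‹_› : TopologicalSpace H)) (φ : G →+ H) :
    PrecompactCover (TopologicalSpace.induced φ ‹_›) := by
  rw [precompactCover_iff_forall_isCoveredBySmallSets _ (topologicalAddGroup_induced φ)]
  rw [precompactCover_iff_forall_isCoveredBySmallSets _ ‹_›] at h
  intro W hW
  rw [nhds_induced, map_zero] at hW
  obtain ⟨V, hV, hVW⟩ := hW
  exact ((h V hV).preimage φ).mono hVW

lemma IsTauU.continuous_of_tendsto [TopologicalSpace H] [IsTopologicalAddGroup H] [CompactSpace H]
    {u : ℕ → G} {τ : TopologicalSpace G} (hτ : IsTauU u τ) (φ : G →+ H)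
    (hφ : Tendsto (φ ∘ u) atTop (𝓝 0)) : @Continuous G H τ _ φ := by
  obtain ⟨⟨⟨hgrp, hT2⟩, hcov⟩, hu, hfinest⟩ := hτ
  let p : TopologicalSpace G := .induced φ ‹_›
  have hgrp' : @IsTopologicalAddGroup G (τ ⊓ p) _ :=
    topologicalAddGroup_inf hgrp (topologicalAddGroup_induced φ)
  have hpre : IsPrecompactGroupTopology (τ ⊓ p) :=
    ⟨⟨hgrp', t2Space_antitone inf_le_left hT2⟩,
      hcov.inf (precompactCover_of_compactSpace.induced φ) hgrp (topologicalAddGroup_induced φ)⟩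
  have hu' : ConvergesToZero (τ ⊓ p) u := by
    rw [ConvergesToZero, _root_.nhds_inf (t₁ := τ) (t₂ := p), nhds_induced, map_zero]
    exact tendsto_inf.2 ⟨hu, tendsto_comap_iff.2 hφ⟩
  exact continuous_iff_le_induced.2 ((hfinest _ hpre hu').trans inf_le_right)

end

lemma torus_exists_coe_eq_and_norm_eq (y : Torus) : ∃ s : ℝ, (s : Torus) = y ∧ ‖y‖ = |s| := by
  induction y using QuotientAddGroup.induction_on with
  | H x => exact ⟨x - round x, by simp, UnitAddCircle.norm_eq⟩

lemma torus_norm_two_nsmul {y : Torus} (hy : ‖y‖ ≤ 1 / 4) : ‖2 • y‖ = 2 * ‖y‖ := by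
  obtain ⟨s, rfl, hs⟩ := torus_exists_coe_eq_and_norm_eq y
  have h2s : |2 * s| ≤ |(1 : ℝ)| / 2 := by rw [abs_mul, abs_two, abs_one]; linarith
  rw [← AddCircle.coe_nsmul, nsmul_eq_mul, Nat.cast_ofNat,
    (AddCircle.norm_coe_eq_abs_iff _ one_ne_zero).2 h2s, abs_mul, abs_two, hs]

lemma eq_zero_of_forall_norm_le_quarter {Q : Type*} [AddCommGroup Q] (δ : Q →+ Torus)
    (h : ∀ x, ‖δ x‖ ≤ 1 / 4) : δ = 0 := by
  ext x
  have hpow : ∀ j : ℕ, ‖δ (2 ^ j • x)‖ = 2 ^ j * ‖δ x‖ := by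
    intro j
    induction j with
    | zero => simp
    | succ j ih =>
      have h2 : (2 ^ (j + 1)) • x = 2 • (2 ^ j • x) := by rw [pow_succ', mul_nsmul']
      rw [h2, map_nsmul, torus_norm_two_nsmul (h _), ih, pow_succ']
      ring
  by_contra hne
  obtain ⟨j, hj⟩ := pow_unbounded_of_one_lt (1 / 4 / ‖δ x‖) one_lt_two
  have := (hpow j).symm.trans_le (h _)
  rw [div_lt_iff₀ (norm_pos_iff.2 hne)] at hj
  linarith

section

variable [AddCommGroup G]

lemma PrecompactCover.finite_setOf_norm_le {t : TopologicalSpace G}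
    (h : PrecompactCover t) {U : Set G} (hU : U ∈ @nhds G t 0) :
    {χ : G →+ Torus | ∀ x ∈ U, ‖χ x‖ ≤ 1 / 12}.Finite := by
  obtain ⟨F, hF, hcov⟩ := h U hU
  set P := {χ : G →+ Torus | ∀ x ∈ U, ‖χ x‖ ≤ 1 / 12}
  have heq_of_close : ∀ χ ∈ P, ∀ ψ ∈ P, (∀ f ∈ F, dist (χ f) (ψ f) < 1 / 12) → χ = ψ := by
    intro χ hχ ψ hψ hclose
    refine sub_eq_zero.1 (eq_zero_of_forall_norm_le_quarter (χ - ψ) fun x => ?_)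
    obtain ⟨f, hf, hxf⟩ := hcov x
    have hx : (χ - ψ) x = χ (x - f) - ψ (x - f) + (χ f - ψ f) := by simp; abel
    have hdiff := norm_sub_le (χ (x - f)) (ψ (x - f))
    have hsum := norm_add_le (χ (x - f) - ψ (x - f)) (χ f - ψ f)
    rw [← hx, ← dist_eq_norm (χ f)] at hsum
    linarith [hχ _ hxf, hψ _ hxf, hclose f hf]
  have := hF.fintype
  let r : (G →+ Torus) → (F → Torus) := fun χ f => χ f
  obtain ⟨C, -, hC, hcover⟩ :=
    finite_cover_balls_of_compact (isCompact_univ (X := F → Torus)) (by norm_num : (0 : ℝ) < 1 / 24)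
  choose c hcC hc using fun χ => mem_iUnion₂.1 (hcover (mem_univ (r χ)))
  refine Finite.of_finite_image (hC.subset (image_subset_iff.2 fun χ _ => hcC χ)) ?_
  intro χ hχ ψ hψ hcχψ
  refine heq_of_close χ hχ ψ hψ fun f hf => ?_
  calc dist (χ f) (ψ f) = dist (r χ ⟨f, hf⟩) (r ψ ⟨f, hf⟩) := rfl
    _ ≤ dist (r χ) (r ψ) := dist_le_pi_dist _ _ _
    _ ≤ dist (r χ) (c χ) + dist (r ψ) (c χ) := dist_triangle_right _ _ _
    _ < 1 / 24 + 1 / 24 := add_lt_add (hc χ) (hcχψ ▸ hc ψ)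
    _ = 1 / 12 := by norm_num

lemma PrecompactCover.countable_setOf_continuous [TopologicalSpace G]
    [FirstCountableTopology G] (h : PrecompactCover (‹_› : TopologicalSpace G)) :
    {χ : G →+ Torus | Continuous χ}.Countable := by
  obtain ⟨U, hU⟩ := (𝓝 (0 : G)).exists_antitone_basis
  refine (countable_iUnion fun n => (h.finite_setOf_norm_le (hU.mem n)).countable).mono
    fun χ hχ => ?_
  have hball : χ ⁻¹' Metric.closedBall 0 (1 / 12) ∈ 𝓝 (0 : G) :=
    hχ.continuousAt.preimage_mem_nhds (by
      rw [map_zero]; exact Metric.closedBall_mem_nhds _ (by norm_num))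
  obtain ⟨n, hn⟩ := hU.mem_iff.1 hball
  exact mem_iUnion.2 ⟨n, fun x hx => by simpa using hn hx⟩

end

lemma discreteTopology_of_baireSpace_of_countable {K : Type*} [AddGroup K] [TopologicalSpace K]
    [IsTopologicalAddGroup K] [T1Space K] [BaireSpace K] [Countable K] : DiscreteTopology K := by
  obtain ⟨x, y, hy⟩ := nonempty_interior_of_iUnion_of_closed (f := fun x : K => ({x} : Set K))
    (fun _ => isClosed_singleton) (by ext; simp)
  obtain rfl : y = x := mem_singleton_iff.1 (interior_subset hy)
  have hx : IsOpen ({y} : Set K) :=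
    interior_eq_iff_isOpen.1 (interior_subset.antisymm (singleton_subset_iff.2 hy))
  refine discreteTopology_of_isOpen_singleton_zero ?_
  simpa using hx.preimage (continuous_add_const y)

lemma finite_addMonoidHom_torus_of_countable (Q : Type*) [AddCommGroup Q]
    [Countable (Q →+ Torus)] : Finite (Q →+ Torus) := by
  let K := (AddMonoidHom.coeFn Q Torus).range
  have : CompactSpace K :=
    isCompact_iff_compactSpace.1 (AddMonoidHom.isClosed_range_coe Q Torus).isCompact
  have : Countable K := (AddMonoidHom.rangeRestrict_surjective _).countable
  have : DiscreteTopology K := discreteTopology_of_baireSpace_of_countable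
  have : Finite K := finite_of_compact_of_discrete
  exact Finite.of_injective (AddMonoidHom.coeFn Q Torus).rangeRestrict
    fun _ _ h => DFunLike.coe_injective (congrArg Subtype.val h)

def ratCircleToTorus : AddCircle (1 : ℚ) →+ Torus :=
  QuotientAddGroup.map _ _ (Rat.castHom ℝ).toAddMonoidHom
    (AddSubgroup.zmultiples_le.2 (by simp))

lemma ratCircleToTorus_injective : Function.Injective ratCircleToTorus := by
  refine (injective_iff_map_eq_zero _).2 fun y => ?_
  induction y using QuotientAddGroup.induction_on with
  | H x =>
    intro hx
    obtain ⟨n, hn⟩ := (AddCircle.coe_eq_zero_iff _).1 hx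
    refine (AddCircle.coe_eq_zero_iff _).2 ⟨n, ?_⟩
    simp only [zsmul_eq_mul, mul_one] at hn ⊢
    exact_mod_cast (by simpa using hn : (n : ℝ) = x)

lemma exists_torus_apply_ne_zero {Q : Type*} [AddCommGroup Q] {q : Q} (hq : q ≠ 0) :
    ∃ ψ : Q →+ Torus, ψ q ≠ 0 := by
  obtain ⟨c, hc⟩ := CharacterModule.exists_character_apply_ne_zero_of_ne_zero hq
  exact ⟨ratCircleToTorus.comp c,
    fun h => hc (ratCircleToTorus_injective (h.trans (map_zero _).symm))⟩

lemma finite_of_finite_addMonoidHom_torus (Q : Type*) [AddCommGroup Q]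
    [Finite (Q →+ Torus)] : Finite Q := by
  set n := Nat.card (Q →+ Torus)
  have : Fact ((0 : ℝ) < 1) := ⟨one_pos⟩
  have : Finite {x : Torus | n • x = 0} := (AddCircle.finite_torsion 1 Nat.card_pos).to_subtype
  have hn : ∀ (ψ : Q →+ Torus) (q : Q), n • ψ q = 0 := fun ψ q => by
    rw [← AddMonoidHom.nsmul_apply, card_nsmul_eq_zero', AddMonoidHom.zero_apply]
  refine Finite.of_injective (fun q (ψ : Q →+ Torus) => (⟨ψ q, hn ψ q⟩ : {x : Torus | n • x = 0}))
    fun q q' h => ?_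
  by_contra hne
  obtain ⟨ψ, hψ⟩ := exists_torus_apply_ne_zero (sub_ne_zero.2 hne)
  exact hψ (by rw [map_sub, sub_eq_zero]; exact congrArg Subtype.val (congrFun h ψ))

lemma finite_of_countable_addMonoidHom_torus (Q : Type*) [AddCommGroup Q]
    [Countable (Q →+ Torus)] : Finite Q :=
  have := finite_addMonoidHom_torus_of_countable Q
  finite_of_finite_addMonoidHom_torus Q

theorem stmt2_general {G : Type*} [AddCommGroup G] (τ : TopologicalSpace G)
    (hmet : @TopologicalSpace.MetrizableSpace G τ)
    (u : ℕ → G) (hchar : IsTauU u τ) :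
    (AddSubgroup.closure (Set.range u)).FiniteIndex := by
  let := τ
  set H := AddSubgroup.closure (Set.range u)
  have hcont (ψ : G ⧸ H →+ Torus) : Continuous (ψ.comp (QuotientAddGroup.mk' H)) := by
    refine hchar.continuous_of_tendsto _ (tendsto_const_nhds.congr fun n => ?_)
    have : (u n : G ⧸ H) = 0 :=
      (QuotientAddGroup.eq_zero_iff _).2 (AddSubgroup.subset_closure (mem_range_self n))
    simp [this]
  have : Countable (G ⧸ H →+ Torus) := by
    have hinj : InjOn (fun ψ : G ⧸ H →+ Torus => ψ.comp (QuotientAddGroup.mk' H)) univ :=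
      fun ψ₁ _ ψ₂ _ h => (AddMonoidHom.cancel_right (QuotientAddGroup.mk'_surjective H)).1 h
    have hmaps : MapsTo (fun ψ : G ⧸ H →+ Torus => ψ.comp (QuotientAddGroup.mk' H)) univ
        {χ | Continuous χ} := fun ψ _ => hcont ψ
    exact countable_univ_iff.1 (hmaps.countable_of_injOn hinj
      hchar.1.2.countable_setOf_continuous)
  have := finite_of_countable_addMonoidHom_torus (G ⧸ H)
  exact AddSubgroup.finiteIndex_of_finite_quotient

/-- If `(G,τ)` is metrizable precompact Hausdorff and `u` is a TB-sequence
with `τ = τ_u`, then the subgroup generated by the terms of `u` has finite index. -/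
theorem stmt2 {G : Type*} [AddCommGroup G] (τ : TopologicalSpace G)
    (hpre : IsPrecompactGroupTopology τ) (hmet : @TopologicalSpace.MetrizableSpace G τ)
    (u : ℕ → G) (hu : IsTBSequence u) (hchar : IsTauU u τ) :
    (AddSubgroup.closure (Set.range u)).FiniteIndex :=
  stmt2_general τ hmet u hchar

end SSChar
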